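/- arXiv:2602.19563 — 4 statements merged into one kernel-verified Lean document; each statement's English description precedes it below -/
import Mathlib

section
/- Let P1 = conv{e1+e2, e3, e4, 0} and P2 = conv{e3+e4, e1, e2, 0} be tetrahedra in R^4. Then the volume polynomial vol(T1*P1 + T2*P2) equals (1/3)T1^3*T2 + T1^2*T2^2 + (1/3)T1*T2^3. -/
/-!
Write points of ℝ⁴ as `x = (s + r, s - r, z + w, z - w)`. In the coordinates `(r, w, s, z)` the
Minkowski sum `T₁P₁ + T₂P₂` is the set of points with `|r| ≤ T₂/2`, `|w| ≤ T₁/2` and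
`(s - |r|, z - |w|)` in the quadrilateral `Q(T₂/2 - |r|, T₁/2 - |w|)`, where
`Q(α, β) = {s, z ≥ 0, s + 2z ≤ 4α + 2β, 2s + z ≤ 2α + 4β}` has area `α² + β² + 4αβ`.
The change of coordinates has determinant `-4`, so by Fubini and the symmetry in `r` and `w`
the volume is `16 ∫₀^{T₂/2} ∫₀^{T₁/2} (α² + β² + 4αβ) dβ dα`.
-/

open MeasureTheory Pointwise

noncomputable section

/-- The i-th standard basis vector of ℝ⁴. -/
def e (i : Fin 4) : Fin 4 → ℝ := Pi.single i 1

/-- The tetrahedron P₁ = conv{e₁+e₂, e₃, e₄, 0}. -/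
def P1 : Set (Fin 4 → ℝ) := convexHull ℝ {e 0 + e 1, e 2, e 3, 0}

/-- The tetrahedron P₂ = conv{e₃+e₄, e₁, e₂, 0}. -/
def P2 : Set (Fin 4 → ℝ) := convexHull ℝ {e 2 + e 3, e 0, e 1, 0}

open Set

section ConvexHull

variable {E : Type*} [AddCommGroup E] [Module ℝ E]

lemma convexHull_insert_zero_eq (u v w : E) :
    convexHull ℝ {u, v, w, 0} = {x | ∃ a b c : ℝ, 0 ≤ a ∧ 0 ≤ b ∧ 0 ≤ c ∧ a + b + c ≤ 1 ∧
      a • u + b • v + c • w = x} := by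
  apply Subset.antisymm
  · refine convexHull_min ?_ ?_
    · rintro x (rfl | rfl | rfl | rfl)
      · exact ⟨1, 0, 0, by norm_num, by norm_num, by norm_num, by norm_num, by simp⟩
      · exact ⟨0, 1, 0, by norm_num, by norm_num, by norm_num, by norm_num, by simp⟩
      · exact ⟨0, 0, 1, by norm_num, by norm_num, by norm_num, by norm_num, by simp⟩
      · exact ⟨0, 0, 0, by norm_num, by norm_num, by norm_num, by norm_num, by simp⟩
    · rintro _ ⟨a, b, c, ha, hb, hc, habc, rfl⟩ _ ⟨a', b', c', ha', hb', hc', habc', rfl⟩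
        θ φ hθ hφ hθφ
      exact ⟨θ * a + φ * a', θ * b + φ * b', θ * c + φ * c', by positivity, by positivity,
        by positivity, by nlinarith, by module⟩
  · rintro _ ⟨a, b, c, ha, hb, hc, habc, rfl⟩
    have := (convex_convexHull ℝ ({u, v, w, 0} : Set E)).sum_mem (t := Finset.univ)
      (w := ![a, b, c, 1 - a - b - c]) (z := ![u, v, w, 0])
      (fun i _ => by fin_cases i <;> simp <;> linarith)
      (by simp [Fin.sum_univ_four])
      (fun i _ => subset_convexHull ℝ _ (by fin_cases i <;> simp))
    simpa [Fin.sum_univ_four] using this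

lemma mem_smul_convexHull_insert_zero {t : ℝ} (ht : 0 ≤ t) {u v w x : E} :
    x ∈ t • convexHull ℝ {u, v, w, 0} ↔ ∃ a b c : ℝ, 0 ≤ a ∧ 0 ≤ b ∧ 0 ≤ c ∧ a + b + c ≤ t ∧
      a • u + b • v + c • w = x := by
  rw [convexHull_insert_zero_eq, mem_smul_set]
  constructor
  · rintro ⟨_, ⟨a, b, c, ha, hb, hc, habc, rfl⟩, rfl⟩
    exact ⟨t * a, t * b, t * c, by positivity, by positivity, by positivity, by nlinarith,
      by module⟩
  · rintro ⟨a, b, c, ha, hb, hc, habc, rfl⟩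
    rcases ht.eq_or_lt with rfl | ht
    · obtain ⟨rfl, rfl, rfl⟩ : a = 0 ∧ b = 0 ∧ c = 0 := by refine ⟨?_, ?_, ?_⟩ <;> linarith
      exact ⟨0, ⟨0, 0, 0, by simp⟩, by simp⟩
    · refine ⟨(a / t) • u + (b / t) • v + (c / t) • w, ⟨a / t, b / t, c / t, by positivity,
        by positivity, by positivity, ?_, rfl⟩, ?_⟩
      · rw [← add_div, ← add_div, div_le_one ht]
        exact habc
      · simp only [smul_add, smul_smul, mul_div_cancel₀ _ ht.ne']

end ConvexHull

lemma integral_eq_of_eqOn_quadratic {f : ℝ → ℝ} {a b c₀ c₁ c₂ : ℝ}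
    (hf : EqOn f (fun x => c₀ + c₁ * x + c₂ * x ^ 2) (uIcc a b)) :
    ∫ x in a..b, f x = c₀ * (b - a) + c₁ * (b ^ 2 - a ^ 2) / 2 + c₂ * (b ^ 3 - a ^ 3) / 3 := by
  rw [intervalIntegral.integral_congr hf, intervalIntegral.integral_add,
    intervalIntegral.integral_add, intervalIntegral.integral_const,
    intervalIntegral.integral_const_mul, integral_id, intervalIntegral.integral_const_mul,
    integral_pow, smul_eq_mul]
  · ring
  all_goals exact Continuous.intervalIntegrable (by fun_prop) _ _

lemma lintegral_indicator_Icc_ofReal {f : ℝ → ℝ} (hf : Continuous f) {a b : ℝ} (hab : a ≤ b)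
    (hf₀ : ∀ x ∈ Icc a b, 0 ≤ f x) :
    ∫⁻ x, (Icc a b).indicator (fun x => ENNReal.ofReal (f x)) x =
      ENNReal.ofReal (∫ x in a..b, f x) := by
  rw [lintegral_indicator measurableSet_Icc, ← ofReal_integral_eq_lintegral_ofReal
    hf.integrableOn_Icc (ae_restrict_of_forall_mem measurableSet_Icc hf₀),
    integral_Icc_eq_integral_Ioc, intervalIntegral.integral_of_le hab]

lemma lintegral_ite_abs_le {f : ℝ → ℝ} (hf : Continuous f) {a : ℝ} (ha : 0 ≤ a)
    (hf₀ : ∀ x ∈ Icc 0 a, 0 ≤ f x) :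
    ∫⁻ r, (if |r| ≤ a then ENNReal.ofReal (f (a - |r|)) else 0) =
      ENNReal.ofReal (2 * ∫ x in 0..a, f x) := by
  have hcont : Continuous fun r => f (a - |r|) := by fun_prop
  have hind : ∀ r, (if |r| ≤ a then ENNReal.ofReal (f (a - |r|)) else 0) =
      (Icc (-a) a).indicator (fun r => ENNReal.ofReal (f (a - |r|))) r := fun r => by
    simp [indicator_apply, abs_le]
  have hneg : ∫ r in (-a)..0, f (a - |r|) = ∫ x in 0..a, f x := by
    rw [intervalIntegral.integral_congr (g := fun r => f (a + r)) fun r hr => ?_,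
      intervalIntegral.integral_comp_add_left]
    · simp
    · rw [uIcc_of_le (by linarith), mem_Icc] at hr
      simp [abs_of_nonpos hr.2]
  have hpos : ∫ r in (0:ℝ)..a, f (a - |r|) = ∫ x in 0..a, f x := by
    rw [intervalIntegral.integral_congr (g := fun r => f (a - r)) fun r hr => ?_,
      intervalIntegral.integral_comp_sub_left]
    · simp
    · rw [uIcc_of_le ha, mem_Icc] at hr
      simp [abs_of_nonneg hr.1]
  simp_rw [hind]
  rw [lintegral_indicator_Icc_ofReal hcont (by linarith) fun r hr => hf₀ _ ?_,
    ← intervalIntegral.integral_add_adjacent_intervals (b := 0) (hcont.intervalIntegrable _ _)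
      (hcont.intervalIntegrable _ _), hneg, hpos, two_mul]
  have := abs_le.2 hr
  constructor <;> linarith [abs_nonneg r]

lemma lintegral_fin_four {α : Type*} [MeasureSpace α] [SigmaFinite (volume : Measure α)]
    {f : (Fin 4 → α) → ENNReal} (hf : Measurable f) :
    ∫⁻ y, f y = ∫⁻ r, ∫⁻ w, ∫⁻ s, ∫⁻ z, f ![r, w, s, z] := by
  rcases isEmpty_or_nonempty α with hα | ⟨⟨a⟩⟩
  · simp [Measure.eq_zero_of_isEmpty]
  rw [volume_pi, lintegral_eq_lmarginal_univ (fun _ => a),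
    show (Finset.univ : Finset (Fin 4)) = {0, 1, 2, 3} by decide,
    lmarginal_insert _ hf (by decide)]
  simp only [lmarginal_insert _ hf (show (1 : Fin 4) ∉ ({2, 3} : Finset (Fin 4)) by decide),
    lmarginal_insert _ hf (show (2 : Fin 4) ∉ ({3} : Finset (Fin 4)) by decide),
    lmarginal_singleton]
  congr! with r w s z
  ext i
  fin_cases i <;> simp

def quadrilateral (α β : ℝ) : Set (ℝ × ℝ) :=
  {p | 0 ≤ p.1 ∧ 0 ≤ p.2 ∧ p.1 + 2 * p.2 ≤ 4 * α + 2 * β ∧ 2 * p.1 + p.2 ≤ 2 * α + 4 * β}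

lemma measurableSet_quadrilateral (α β : ℝ) : MeasurableSet (quadrilateral α β) := by
  simp only [quadrilateral, ofPred_and]
  refine .inter ?_ (.inter ?_ (.inter ?_ ?_)) <;> exact measurableSet_le (by fun_prop) (by fun_prop)

lemma volume_quadrilateral {α β : ℝ} (hα : 0 ≤ α) (hβ : 0 ≤ β) :
    volume (quadrilateral α β) = ENNReal.ofReal (α ^ 2 + β ^ 2 + 4 * α * β) := by
  set height := fun s : ℝ => min ((4 * α + 2 * β - s) / 2) (2 * α + 4 * β - 2 * s)
  have hfibre : ∀ s, volume (Prod.mk s ⁻¹' quadrilateral α β) =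
      (Icc 0 (α + 2 * β)).indicator (fun s => ENNReal.ofReal (height s)) s := by
    intro s
    by_cases hs : 0 ≤ s
    · have : Prod.mk s ⁻¹' quadrilateral α β = Icc 0 (height s) := by
        ext z
        simp only [quadrilateral, height, mem_preimage, mem_ofPred_eq, mem_Icc, le_min_iff]
        constructor
        · rintro ⟨-, hz, h1, h2⟩; exact ⟨hz, by linarith, by linarith⟩
        · rintro ⟨hz, h1, h2⟩; exact ⟨hs, hz, by linarith, by linarith⟩
      rw [this, Real.volume_Icc, sub_zero, indicator_apply]
      split_ifs with h
      · rfl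
      · rw [ENNReal.ofReal_eq_zero]
        simp only [mem_Icc, not_and, not_le] at h
        exact (min_le_right _ _).trans (by linarith [h hs])
    · have : Prod.mk s ⁻¹' quadrilateral α β = ∅ := by
        ext z
        simp only [quadrilateral, preimage_ofPred_eq, mem_ofPred_eq, mem_empty_iff_false, iff_false,
          not_and, not_le]
        intro h
        linarith
      rw [this, measure_empty, indicator_of_notMem (fun h => hs h.1)]
  have hcont : Continuous height := by fun_prop
  have hleft : ∫ s in (0:ℝ)..2 * β, height s = β ^ 2 + 4 * α * β := by
    rw [integral_eq_of_eqOn_quadratic (c₀ := 2 * α + β) (c₁ := -1 / 2) (c₂ := 0) fun s hs => ?_]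
    · ring
    rw [uIcc_of_le (by linarith), mem_Icc] at hs
    simp only [height]
    rw [min_eq_left (by linarith)]
    ring
  have hright : ∫ s in (2 * β)..(α + 2 * β), height s = α ^ 2 := by
    rw [integral_eq_of_eqOn_quadratic (c₀ := 2 * α + 4 * β) (c₁ := -2) (c₂ := 0) fun s hs => ?_]
    · ring
    rw [uIcc_of_le (by linarith), mem_Icc] at hs
    simp only [height]
    rw [min_eq_right (by linarith)]
    ring
  rw [Measure.volume_eq_prod, Measure.prod_apply (measurableSet_quadrilateral α β)]
  simp_rw [hfibre]
  rw [lintegral_indicator_Icc_ofReal hcont (by linarith) fun s hs => ?_,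
    ← intervalIntegral.integral_add_adjacent_intervals (b := 2 * β) (hcont.intervalIntegrable _ _)
      (hcont.intervalIntegrable _ _), hleft, hright]
  · congr 1; ring
  · exact le_min (by linarith [hs.2]) (by linarith [hs.2])

def quadrilateralBundle (a b : ℝ) : Set (Fin 4 → ℝ) :=
  {y | |y 0| ≤ a ∧ |y 1| ≤ b ∧ (y 2 - |y 0|, y 3 - |y 1|) ∈ quadrilateral (a - |y 0|) (b - |y 1|)}

lemma measurableSet_quadrilateralBundle (a b : ℝ) : MeasurableSet (quadrilateralBundle a b) := by
  simp only [quadrilateralBundle, quadrilateral, ofPred_and]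
  refine .inter ?_ (.inter ?_ (.inter ?_ (.inter ?_ (.inter ?_ ?_)))) <;>
    exact measurableSet_le (by fun_prop) (by fun_prop)

lemma lintegral_lintegral_indicator_quadrilateralBundle (a b r w : ℝ) :
    ∫⁻ s, ∫⁻ z, (quadrilateralBundle a b).indicator 1 ![r, w, s, z] =
      if |r| ≤ a ∧ |w| ≤ b then
        ENNReal.ofReal ((a - |r|) ^ 2 + (b - |w|) ^ 2 + 4 * (a - |r|) * (b - |w|))
      else 0 := by
  classical
  split_ifs with h
  · set Q := quadrilateral (a - |r|) (b - |w|)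
    have hshift : ∀ s z, (quadrilateralBundle a b).indicator 1 ![r, w, s, z] =
        Q.indicator (1 : ℝ × ℝ → ENNReal) (s - |r|, z - |w|) := by
      intro s z
      have hmem : ![r, w, s, z] ∈ quadrilateralBundle a b ↔ (s - |r|, z - |w|) ∈ Q := by
        simp [quadrilateralBundle, h, Q]
      simp only [indicator_apply, hmem, Pi.one_apply]
    have hz : ∀ s, ∫⁻ z, Q.indicator 1 (s, z - |w|) = ∫⁻ z, Q.indicator 1 (s, z) :=
      fun s => lintegral_sub_right_eq_self (fun z => Q.indicator 1 (s, z)) _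
    simp_rw [hshift, hz]
    rw [lintegral_sub_right_eq_self (fun s => ∫⁻ z, Q.indicator 1 (s, z)),
      ← volume_quadrilateral (by linarith [h.1]) (by linarith [h.2]),
      ← lintegral_indicator_one (measurableSet_quadrilateral _ _), Measure.volume_eq_prod,
      lintegral_prod _ (measurable_one.indicator (measurableSet_quadrilateral _ _)).aemeasurable]
  · have : ∀ s z,
        (quadrilateralBundle a b).indicator (1 : (Fin 4 → ℝ) → ENNReal) ![r, w, s, z] = 0 :=
      fun s z => indicator_of_notMem (fun hy => h ⟨hy.1, hy.2.1⟩) _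
    simp [this]

lemma volume_quadrilateralBundle {a b : ℝ} (ha : 0 ≤ a) (hb : 0 ≤ b) :
    volume (quadrilateralBundle a b) =
      ENNReal.ofReal (4 / 3 * (a ^ 3 * b + 3 * a ^ 2 * b ^ 2 + a * b ^ 3)) := by
  have hslice : ∀ r, ∫⁻ w, (if |r| ≤ a ∧ |w| ≤ b then
        ENNReal.ofReal ((a - |r|) ^ 2 + (b - |w|) ^ 2 + 4 * (a - |r|) * (b - |w|)) else 0) =
      if |r| ≤ a then ENNReal.ofReal (2 * (b * (a - |r|) ^ 2 + 2 * b ^ 2 * (a - |r|) + b ^ 3 / 3))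
      else 0 := by
    intro r
    split_ifs with hr
    · simp only [hr, true_and]
      rw [lintegral_ite_abs_le (f := fun β => (a - |r|) ^ 2 + β ^ 2 + 4 * (a - |r|) * β)
        (by fun_prop) hb fun β hβ => by nlinarith [hβ.1],
        integral_eq_of_eqOn_quadratic (c₀ := (a - |r|) ^ 2) (c₁ := 4 * (a - |r|)) (c₂ := 1)
          fun β _ => by ring]
      congr 1; ring
    · simp [hr]
  rw [← lintegral_indicator_one (measurableSet_quadrilateralBundle a b),
    lintegral_fin_four (measurable_one.indicator (measurableSet_quadrilateralBundle a b))]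
  simp_rw [lintegral_lintegral_indicator_quadrilateralBundle, hslice]
  rw [lintegral_ite_abs_le (f := fun α => 2 * (b * α ^ 2 + 2 * b ^ 2 * α + b ^ 3 / 3))
      (by fun_prop) ha fun α hα => by have := hα.1; positivity,
    integral_eq_of_eqOn_quadratic (c₀ := 2 * b ^ 3 / 3) (c₁ := 4 * b ^ 2) (c₂ := 2 * b)
      fun α _ => by ring]
  congr 1; ring

def sumDiffMatrix : Matrix (Fin 4) (Fin 4) ℝ :=
  !![1, 0, 1, 0; -1, 0, 1, 0; 0, 1, 0, 1; 0, -1, 0, 1]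

lemma det_sumDiffMatrix : sumDiffMatrix.det = -4 := by
  simp [sumDiffMatrix, Matrix.det_succ_row_zero, Fin.sum_univ_succ, Fin.succAbove]
  norm_num

lemma toLin'_sumDiffMatrix_apply (y : Fin 4 → ℝ) :
    Matrix.toLin' sumDiffMatrix y = ![y 2 + y 0, y 2 - y 0, y 3 + y 1, y 3 - y 1] := by
  ext i
  fin_cases i <;> simp [sumDiffMatrix, Matrix.mulVec, dotProduct, Fin.sum_univ_four] <;> ring

lemma preimage_smul_P1_add_smul_P2 {t₁ t₂ : ℝ} (h₁ : 0 ≤ t₁) (h₂ : 0 ≤ t₂) :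
    Matrix.toLin' sumDiffMatrix ⁻¹' (t₁ • P1 + t₂ • P2) =
      quadrilateralBundle (t₂ / 2) (t₁ / 2) := by
  ext y
  simp only [mem_preimage, mem_add, P1, P2, mem_smul_convexHull_insert_zero h₁,
    mem_smul_convexHull_insert_zero h₂, toLin'_sumDiffMatrix_apply, quadrilateralBundle,
    quadrilateral, mem_ofPred_eq]
  constructor
  · rintro ⟨_, ⟨a₁, a₂, a₃, ha₁, ha₂, ha₃, ha, rfl⟩, _, ⟨b₁, b₂, b₃, hb₁, hb₂, hb₃, hb, rfl⟩, hy⟩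
    have h0 : a₁ + b₂ = y 2 + y 0 := by simpa [e] using congrFun hy 0
    have h1 : a₁ + b₃ = y 2 - y 0 := by simpa [e] using congrFun hy 1
    have h2 : a₂ + b₁ = y 3 + y 1 := by simpa [e] using congrFun hy 2
    have h3 : a₃ + b₁ = y 3 - y 1 := by simpa [e] using congrFun hy 3
    rcases abs_cases (y 0) with ⟨hr, -⟩ | ⟨hr, -⟩ <;>
      rcases abs_cases (y 1) with ⟨hw, -⟩ | ⟨hw, -⟩ <;>
      rw [hr, hw] <;> refine ⟨?_, ?_, ?_, ?_, ?_, ?_⟩ <;> linarith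
  · rintro ⟨hr, hw, hs, hz, hsz, hzs⟩
    -- the weights of `e 0 + e 1` in the `P1`-summand and of `e 2 + e 3` in the `P2`-summand
    -- are taken as large as the remaining constraints allow
    set a₁ := min (y 2 - |y 0|) (t₁ - 2 * |y 1|)
    set b₁ := min (y 3 - |y 1|) (t₂ - 2 * |y 0|)
    have := neg_abs_le (y 0)
    have := le_abs_self (y 0)
    have := neg_abs_le (y 1)
    have := le_abs_self (y 1)
    have := min_le_left (y 2 - |y 0|) (t₁ - 2 * |y 1|)
    have := min_le_right (y 2 - |y 0|) (t₁ - 2 * |y 1|)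
    have := min_le_left (y 3 - |y 1|) (t₂ - 2 * |y 0|)
    have := min_le_right (y 3 - |y 1|) (t₂ - 2 * |y 0|)
    refine ⟨_, ⟨a₁, y 3 + y 1 - b₁, y 3 - y 1 - b₁, ?_, ?_, ?_, ?_, rfl⟩,
      _, ⟨b₁, y 2 + y 0 - a₁, y 2 - y 0 - a₁, ?_, ?_, ?_, ?_, rfl⟩, ?_⟩
    · exact le_min (by linarith) (by linarith)
    · linarith
    · linarith
    · rcases min_cases (y 3 - |y 1|) (t₂ - 2 * |y 0|) with ⟨h, -⟩ | ⟨h, -⟩ <;> linarith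
    · exact le_min (by linarith) (by linarith)
    · linarith
    · linarith
    · rcases min_cases (y 2 - |y 0|) (t₁ - 2 * |y 1|) with ⟨h, -⟩ | ⟨h, -⟩ <;> linarith
    · ext i
      fin_cases i <;> simp [e]

/-- The volume polynomial vol(T₁P₁ + T₂P₂) equals (1/3)T₁³T₂ + T₁²T₂² + (1/3)T₁T₂³. -/
theorem stmt4 (t1 t2 : ℝ) (h1 : 0 ≤ t1) (h2 : 0 ≤ t2) :
    (volume (t1 • P1 + t2 • P2)).toReal =
      (1 / 3) * t1 ^ 3 * t2 + t1 ^ 2 * t2 ^ 2 + (1 / 3) * t1 * t2 ^ 3 := by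
  have hdet : LinearMap.det (Matrix.toLin' sumDiffMatrix) ≠ 0 := by
    rw [LinearMap.det_toLin', det_sumDiffMatrix]; norm_num
  have hsurj : Function.Surjective (Matrix.toLin' sumDiffMatrix) :=
    (LinearMap.equivOfDetNeZero _ hdet).surjective
  rw [← image_preimage_eq (t1 • P1 + t2 • P2) hsurj, preimage_smul_P1_add_smul_P2 h1 h2,
    Measure.addHaar_image_linearMap, LinearMap.det_toLin', det_sumDiffMatrix,
    volume_quadrilateralBundle (by positivity) (by positivity), ← ENNReal.ofReal_mul (by norm_num),
    ENNReal.toReal_ofReal (by positivity)]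
  norm_num
  ring

end
end

section
/- Let P1 = conv{e1+e2, e3, e4, 0} and P2 = conv{e3+e4, e1, e2, 0} in R^4. Then the Minkowski sum 2*P1 + P2 contains exactly one lattice point of Z^4 in its interior, and P1 + P2 contains no interior lattice point. -/
open Pointwise

noncomputable section

/-- A point of ℝ⁴ is a lattice point if all its coordinates are integers. -/
def IsLatticePoint (x : Fin 4 → ℝ) : Prop := ∀ i, ∃ z : ℤ, x i = (z : ℝ)

/-- linear functional -/
def L (a x : Fin 4 → ℝ) : ℝ := ∑ i, a i * x i

lemma L_add (a x y : Fin 4 → ℝ) : L a (x + y) = L a x + L a y := by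
  simp [L, mul_add, Finset.sum_add_distrib]

lemma L_isLinear (a : Fin 4 → ℝ) : IsLinearMap ℝ (L a) := by
  constructor
  · exact L_add a
  · intro r x
    simp [L, Finset.mul_sum, mul_left_comm]

lemma hull_bound (a : Fin 4 → ℝ) (c : ℝ) (V : Set (Fin 4 → ℝ))
    (hV : ∀ v ∈ V, L a v ≤ c) : ∀ x ∈ convexHull ℝ V, L a x ≤ c :=
  fun x hx => convexHull_min hV (convex_halfSpace_le (L_isLinear a) c) hx

lemma interior_bound {S : Set (Fin 4 → ℝ)} (a : Fin 4 → ℝ) (j : Fin 4) (haj : a j ≠ 0)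
    (c : ℝ) (hS : ∀ x ∈ S, L a x ≤ c) {x : Fin 4 → ℝ} (hx : x ∈ interior S) :
    L a x < c := by
  rcases lt_or_eq_of_le (hS x (interior_subset hx)) with h | h
  · exact h
  exfalso
  rw [mem_interior_iff_mem_nhds, Metric.mem_nhds_iff] at hx
  obtain ⟨ε, hε, hball⟩ := hx
  set s : ℝ := if 0 ≤ a j then ε/2 else -(ε/2) with hs
  have hy : x + Pi.single j s ∈ S := by
    apply hball
    rw [Metric.mem_ball, dist_eq_norm]
    have : x + Pi.single j s - x = Pi.single j s := by ring
    rw [this, Pi.norm_single]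
    have : ‖s‖ = ε/2 := by
      rw [hs]; split <;> simp [abs_of_nonneg, abs_of_nonpos, le_of_lt hε, Real.norm_eq_abs] <;>
        rw [abs_of_pos (by linarith)] <;> linarith
    rw [this]; linarith
  have hLy : L a (x + Pi.single j s) = c + a j * s := by
    rw [L_add, h]
    congr 1
    simp [L, Pi.single_apply, mul_ite, Finset.sum_ite_eq']
  have hpos : 0 < a j * s := by
    rw [hs]; rcases lt_or_gt_of_ne haj with h' | h'
    · rw [if_neg (not_le.mpr h')]
      exact mul_pos_of_neg_of_neg h' (by linarith)
    · rw [if_pos (le_of_lt h')]; positivity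
  have := hS _ hy
  rw [hLy] at this
  linarith

lemma mem_P1 {a b c : ℝ} (ha : 0 ≤ a) (hb : 0 ≤ b) (hc : 0 ≤ c) (h : a + b + c ≤ 1) :
    (![a, a, b, c] : Fin 4 → ℝ) ∈ P1 := by
  have := (convex_convexHull ℝ ({e 0 + e 1, e 2, e 3, 0} : Set (Fin 4 → ℝ))).sum_mem
    (t := Finset.univ) (w := ![a, b, c, 1 - (a + b + c)])
    (z := ![e 0 + e 1, e 2, e 3, 0])
    (by intro i _; fin_cases i <;> simp <;> linarith)
    (by rw [Fin.sum_univ_four]; simp <;> ring)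
    (by intro i _; fin_cases i <;> exact subset_convexHull ℝ _ (by simp))
  unfold P1
  convert this using 1
  rw [Fin.sum_univ_four]
  funext i
  fin_cases i <;> simp [e, Pi.single_apply] <;> ring

lemma mem_P2 {d f g : ℝ} (hd : 0 ≤ d) (hf : 0 ≤ f) (hg : 0 ≤ g) (h : d + f + g ≤ 1) :
    (![d, f, g, g] : Fin 4 → ℝ) ∈ P2 := by
  have := (convex_convexHull ℝ ({e 2 + e 3, e 0, e 1, 0} : Set (Fin 4 → ℝ))).sum_mem
    (t := Finset.univ) (w := ![g, d, f, 1 - (d + f + g)])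
    (z := ![e 2 + e 3, e 0, e 1, 0])
    (by intro i _; fin_cases i <;> simp <;> linarith)
    (by rw [Fin.sum_univ_four]; simp <;> ring)
    (by intro i _; fin_cases i <;> exact subset_convexHull ℝ _ (by simp))
  unfold P2
  convert this using 1
  rw [Fin.sum_univ_four]
  funext i
  fin_cases i <;> simp [e, Pi.single_apply] <;> ring



lemma vertex_bound_P1 (a : Fin 4 → ℝ) (c : ℝ)
    (h1 : a 0 + a 1 ≤ c) (h2 : a 2 ≤ c) (h3 : a 3 ≤ c) (h4 : (0:ℝ) ≤ c) :
    ∀ x ∈ P1, L a x ≤ c := by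
  apply hull_bound
  intro v hv
  simp only [Set.mem_insert_iff, Set.mem_singleton_iff] at hv
  rcases hv with rfl | rfl | rfl | rfl <;>
    simp [L, Fin.sum_univ_four, e, Pi.single_apply] <;> linarith

lemma vertex_bound_P2 (a : Fin 4 → ℝ) (c : ℝ)
    (h1 : a 2 + a 3 ≤ c) (h2 : a 0 ≤ c) (h3 : a 1 ≤ c) (h4 : (0:ℝ) ≤ c) :
    ∀ x ∈ P2, L a x ≤ c := by
  apply hull_bound
  intro v hv
  simp only [Set.mem_insert_iff, Set.mem_singleton_iff] at hv
  rcases hv with rfl | rfl | rfl | rfl <;>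
    simp [L, Fin.sum_univ_four, e, Pi.single_apply] <;> linarith

lemma S_bound (a : Fin 4 → ℝ) (c1 c2 : ℝ)
    (h1 : ∀ x ∈ P1, L a x ≤ c1) (h2 : ∀ x ∈ P2, L a x ≤ c2) :
    ∀ y ∈ P1 + P1 + P2, L a y ≤ 2 * c1 + c2 := by
  intro y hy
  rw [Set.mem_add] at hy
  obtain ⟨u, hu, q, hq, rfl⟩ := hy
  rw [Set.mem_add] at hu
  obtain ⟨p, hp, p', hp', rfl⟩ := hu
  rw [L_add, L_add]
  have := h1 p hp; have := h1 p' hp'; have := h2 q hq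
  linarith

lemma S2_bound (a : Fin 4 → ℝ) (c1 c2 : ℝ)
    (h1 : ∀ x ∈ P1, L a x ≤ c1) (h2 : ∀ x ∈ P2, L a x ≤ c2) :
    ∀ y ∈ P1 + P2, L a y ≤ c1 + c2 := by
  intro y hy
  rw [Set.mem_add] at hy
  obtain ⟨p, hp, q, hq, rfl⟩ := hy
  rw [L_add]
  have := h1 p hp; have := h2 q hq
  linarith



lemma Ldef (a x : Fin 4 → ℝ) : L a x = ∑ i, a i * x i := rfl

/-- The Minkowski sum 2P₁ + P₂ = P₁ + P₁ + P₂ contains exactly one interior lattice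
point, and P₁ + P₂ contains no interior lattice point. -/
theorem stmt5 :
    (∃! x : Fin 4 → ℝ, x ∈ interior (P1 + P1 + P2) ∧ IsLatticePoint x) ∧
    ¬ ∃ x : Fin 4 → ℝ, x ∈ interior (P1 + P2) ∧ IsLatticePoint x := by
  constructor
  · refine ⟨![1,1,1,1], ⟨?_, ?_⟩, ?_⟩
    · -- interior membership of (1,1,1,1)
      rw [mem_interior_iff_mem_nhds, Metric.mem_nhds_iff]
      refine ⟨1/100, by norm_num, ?_⟩
      intro y hy
      rw [Metric.mem_ball, dist_pi_lt_iff (by norm_num)] at hy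
      have h0 : |y 0 - 1| < 1/100 := by
        have := hy 0; rwa [Real.dist_eq, show (![1,1,1,1] : Fin 4 → ℝ) 0 = 1 from rfl] at this
      have h1 : |y 1 - 1| < 1/100 := by
        have := hy 1; rwa [Real.dist_eq, show (![1,1,1,1] : Fin 4 → ℝ) 1 = 1 from rfl] at this
      have h2 : |y 2 - 1| < 1/100 := by
        have := hy 2; rwa [Real.dist_eq, show (![1,1,1,1] : Fin 4 → ℝ) 2 = 1 from rfl] at this
      have h3 : |y 3 - 1| < 1/100 := by
        have := hy 3; rwa [Real.dist_eq, show (![1,1,1,1] : Fin 4 → ℝ) 3 = 1 from rfl] at this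
      obtain ⟨h0l, h0r⟩ := abs_lt.mp h0
      obtain ⟨h1l, h1r⟩ := abs_lt.mp h1
      obtain ⟨h2l, h2r⟩ := abs_lt.mp h2
      obtain ⟨h3l, h3r⟩ := abs_lt.mp h3
      have hp : (![9/20, 9/20, (y 2 - 3/5)/2, (y 3 - 3/5)/2] : Fin 4 → ℝ) ∈ P1 :=
        mem_P1 (by norm_num) (by linarith) (by linarith) (by linarith)
      have hq : (![y 0 - 9/10, y 1 - 9/10, 3/5, 3/5] : Fin 4 → ℝ) ∈ P2 :=
        mem_P2 (by linarith) (by linarith) (by norm_num) (by linarith)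
      have hdecomp : y = ![9/20, 9/20, (y 2 - 3/5)/2, (y 3 - 3/5)/2]
          + ![9/20, 9/20, (y 2 - 3/5)/2, (y 3 - 3/5)/2]
          + ![y 0 - 9/10, y 1 - 9/10, 3/5, 3/5] := by
        funext i; fin_cases i <;> simp <;> ring
      rw [hdecomp]
      exact Set.add_mem_add (Set.add_mem_add hp hp) hq
    · intro i; fin_cases i <;> exact ⟨1, by norm_num⟩
    · rintro x ⟨hxi, hxl⟩
      choose z hz using hxl
      have b1 : x 0 - x 1 < 1 := by
        have h := interior_bound ![1,-1,0,0] 0 (by norm_num [Matrix.cons_val_two, Matrix.cons_val_three]) (2*0+1)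
          (S_bound _ _ _
            (vertex_bound_P1 _ _ (by norm_num [Matrix.cons_val_two, Matrix.cons_val_three]) (by norm_num [Matrix.cons_val_two, Matrix.cons_val_three]) (by norm_num [Matrix.cons_val_two, Matrix.cons_val_three]) (by norm_num [Matrix.cons_val_two, Matrix.cons_val_three]))
            (vertex_bound_P2 _ _ (by norm_num [Matrix.cons_val_two, Matrix.cons_val_three]) (by norm_num [Matrix.cons_val_two, Matrix.cons_val_three]) (by norm_num [Matrix.cons_val_two, Matrix.cons_val_three]) (by norm_num [Matrix.cons_val_two, Matrix.cons_val_three]))) hxi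
        rw [Ldef] at h
        simp [Fin.sum_univ_four] at h
        linarith
      have b2 : x 1 - x 0 < 1 := by
        have h := interior_bound ![-1,1,0,0] 0 (by norm_num [Matrix.cons_val_two, Matrix.cons_val_three]) (2*0+1)
          (S_bound _ _ _
            (vertex_bound_P1 _ _ (by norm_num [Matrix.cons_val_two, Matrix.cons_val_three]) (by norm_num [Matrix.cons_val_two, Matrix.cons_val_three]) (by norm_num [Matrix.cons_val_two, Matrix.cons_val_three]) (by norm_num [Matrix.cons_val_two, Matrix.cons_val_three]))
            (vertex_bound_P2 _ _ (by norm_num [Matrix.cons_val_two, Matrix.cons_val_three]) (by norm_num [Matrix.cons_val_two, Matrix.cons_val_three]) (by norm_num [Matrix.cons_val_two, Matrix.cons_val_three]) (by norm_num [Matrix.cons_val_two, Matrix.cons_val_three]))) hxi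
        rw [Ldef] at h
        simp [Fin.sum_univ_four] at h
        linarith
      have b3 : -(x 0) + 2*(x 1) + x 2 + x 3 < 4 := by
        have h := interior_bound ![-1,2,1,1] 0 (by norm_num [Matrix.cons_val_two, Matrix.cons_val_three]) (2*1+2)
          (S_bound _ _ _
            (vertex_bound_P1 _ _ (by norm_num [Matrix.cons_val_two, Matrix.cons_val_three]) (by norm_num [Matrix.cons_val_two, Matrix.cons_val_three]) (by norm_num [Matrix.cons_val_two, Matrix.cons_val_three]) (by norm_num [Matrix.cons_val_two, Matrix.cons_val_three]))
            (vertex_bound_P2 _ _ (by norm_num [Matrix.cons_val_two, Matrix.cons_val_three]) (by norm_num [Matrix.cons_val_two, Matrix.cons_val_three]) (by norm_num [Matrix.cons_val_two, Matrix.cons_val_three]) (by norm_num [Matrix.cons_val_two, Matrix.cons_val_three]))) hxi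
        rw [Ldef] at h
        simp [Fin.sum_univ_four] at h
        linarith
      have n0 : 0 < x 0 := by
        have h := interior_bound ![-1,0,0,0] 0 (by norm_num [Matrix.cons_val_two, Matrix.cons_val_three]) (2*0+0)
          (S_bound _ _ _
            (vertex_bound_P1 _ _ (by norm_num [Matrix.cons_val_two, Matrix.cons_val_three]) (by norm_num [Matrix.cons_val_two, Matrix.cons_val_three]) (by norm_num [Matrix.cons_val_two, Matrix.cons_val_three]) (by norm_num [Matrix.cons_val_two, Matrix.cons_val_three]))
            (vertex_bound_P2 _ _ (by norm_num [Matrix.cons_val_two, Matrix.cons_val_three]) (by norm_num [Matrix.cons_val_two, Matrix.cons_val_three]) (by norm_num [Matrix.cons_val_two, Matrix.cons_val_three]) (by norm_num [Matrix.cons_val_two, Matrix.cons_val_three]))) hxi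
        rw [Ldef] at h
        simp [Fin.sum_univ_four] at h
        linarith
      have n1 : 0 < x 1 := by
        have h := interior_bound ![0,-1,0,0] 1 (by norm_num [Matrix.cons_val_two, Matrix.cons_val_three]) (2*0+0)
          (S_bound _ _ _
            (vertex_bound_P1 _ _ (by norm_num [Matrix.cons_val_two, Matrix.cons_val_three]) (by norm_num [Matrix.cons_val_two, Matrix.cons_val_three]) (by norm_num [Matrix.cons_val_two, Matrix.cons_val_three]) (by norm_num [Matrix.cons_val_two, Matrix.cons_val_three]))
            (vertex_bound_P2 _ _ (by norm_num [Matrix.cons_val_two, Matrix.cons_val_three]) (by norm_num [Matrix.cons_val_two, Matrix.cons_val_three]) (by norm_num [Matrix.cons_val_two, Matrix.cons_val_three]) (by norm_num [Matrix.cons_val_two, Matrix.cons_val_three]))) hxi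
        rw [Ldef] at h
        simp [Fin.sum_univ_four] at h
        linarith
      have n2 : 0 < x 2 := by
        have h := interior_bound ![0,0,-1,0] 2 (by norm_num [Matrix.cons_val_two, Matrix.cons_val_three]) (2*0+0)
          (S_bound _ _ _
            (vertex_bound_P1 _ _ (by norm_num [Matrix.cons_val_two, Matrix.cons_val_three]) (by norm_num [Matrix.cons_val_two, Matrix.cons_val_three]) (by norm_num [Matrix.cons_val_two, Matrix.cons_val_three]) (by norm_num [Matrix.cons_val_two, Matrix.cons_val_three]))
            (vertex_bound_P2 _ _ (by norm_num [Matrix.cons_val_two, Matrix.cons_val_three]) (by norm_num [Matrix.cons_val_two, Matrix.cons_val_three]) (by norm_num [Matrix.cons_val_two, Matrix.cons_val_three]) (by norm_num [Matrix.cons_val_two, Matrix.cons_val_three]))) hxi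
        rw [Ldef] at h
        simp [Fin.sum_univ_four] at h
        linarith
      have n3 : 0 < x 3 := by
        have h := interior_bound ![0,0,0,-1] 3 (by norm_num [Matrix.cons_val_two, Matrix.cons_val_three]) (2*0+0)
          (S_bound _ _ _
            (vertex_bound_P1 _ _ (by norm_num [Matrix.cons_val_two, Matrix.cons_val_three]) (by norm_num [Matrix.cons_val_two, Matrix.cons_val_three]) (by norm_num [Matrix.cons_val_two, Matrix.cons_val_three]) (by norm_num [Matrix.cons_val_two, Matrix.cons_val_three]))
            (vertex_bound_P2 _ _ (by norm_num [Matrix.cons_val_two, Matrix.cons_val_three]) (by norm_num [Matrix.cons_val_two, Matrix.cons_val_three]) (by norm_num [Matrix.cons_val_two, Matrix.cons_val_three]) (by norm_num [Matrix.cons_val_two, Matrix.cons_val_three]))) hxi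
        rw [Ldef] at h
        simp [Fin.sum_univ_four] at h
        linarith
      rw [hz 0, hz 1] at b1 b2
      rw [hz 0, hz 1, hz 2, hz 3] at b3
      rw [hz 0] at n0; rw [hz 1] at n1; rw [hz 2] at n2; rw [hz 3] at n3
      have i1 : z 0 - z 1 < 1 := by exact_mod_cast b1
      have i2 : z 1 - z 0 < 1 := by exact_mod_cast b2
      have i3 : -(z 0) + 2*(z 1) + z 2 + z 3 < 4 := by exact_mod_cast b3
      have j0 : 0 < z 0 := by exact_mod_cast n0
      have j1 : 0 < z 1 := by exact_mod_cast n1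
      have j2 : 0 < z 2 := by exact_mod_cast n2
      have j3 : 0 < z 3 := by exact_mod_cast n3
      have hone : ∀ i, z i = 1 := by
        intro i; fin_cases i
        · show z 0 = 1; omega
        · show z 1 = 1; omega
        · show z 2 = 1; omega
        · show z 3 = 1; omega
      funext i
      rw [hz i, hone i]
      fin_cases i <;> norm_num
  · rintro ⟨x, hxi, hxl⟩
    choose z hz using hxl
    have bsum : x 0 + x 1 + x 2 + x 3 < 4 := by
      have h := interior_bound ![1,1,1,1] 0 (by norm_num [Matrix.cons_val_two, Matrix.cons_val_three]) (2+2)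
        (S2_bound _ _ _
          (vertex_bound_P1 _ _ (by norm_num [Matrix.cons_val_two, Matrix.cons_val_three]) (by norm_num [Matrix.cons_val_two, Matrix.cons_val_three]) (by norm_num [Matrix.cons_val_two, Matrix.cons_val_three]) (by norm_num [Matrix.cons_val_two, Matrix.cons_val_three]))
          (vertex_bound_P2 _ _ (by norm_num [Matrix.cons_val_two, Matrix.cons_val_three]) (by norm_num [Matrix.cons_val_two, Matrix.cons_val_three]) (by norm_num [Matrix.cons_val_two, Matrix.cons_val_three]) (by norm_num [Matrix.cons_val_two, Matrix.cons_val_three]))) hxi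
      rw [Ldef] at h
      simp [Fin.sum_univ_four] at h
      linarith
    have n0 : 0 < x 0 := by
      have h := interior_bound ![-1,0,0,0] 0 (by norm_num [Matrix.cons_val_two, Matrix.cons_val_three]) (0+0)
        (S2_bound _ _ _
          (vertex_bound_P1 _ _ (by norm_num [Matrix.cons_val_two, Matrix.cons_val_three]) (by norm_num [Matrix.cons_val_two, Matrix.cons_val_three]) (by norm_num [Matrix.cons_val_two, Matrix.cons_val_three]) (by norm_num [Matrix.cons_val_two, Matrix.cons_val_three]))
          (vertex_bound_P2 _ _ (by norm_num [Matrix.cons_val_two, Matrix.cons_val_three]) (by norm_num [Matrix.cons_val_two, Matrix.cons_val_three]) (by norm_num [Matrix.cons_val_two, Matrix.cons_val_three]) (by norm_num [Matrix.cons_val_two, Matrix.cons_val_three]))) hxi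
      rw [Ldef] at h
      simp [Fin.sum_univ_four] at h
      linarith
    have n1 : 0 < x 1 := by
      have h := interior_bound ![0,-1,0,0] 1 (by norm_num [Matrix.cons_val_two, Matrix.cons_val_three]) (0+0)
        (S2_bound _ _ _
          (vertex_bound_P1 _ _ (by norm_num [Matrix.cons_val_two, Matrix.cons_val_three]) (by norm_num [Matrix.cons_val_two, Matrix.cons_val_three]) (by norm_num [Matrix.cons_val_two, Matrix.cons_val_three]) (by norm_num [Matrix.cons_val_two, Matrix.cons_val_three]))
          (vertex_bound_P2 _ _ (by norm_num [Matrix.cons_val_two, Matrix.cons_val_three]) (by norm_num [Matrix.cons_val_two, Matrix.cons_val_three]) (by norm_num [Matrix.cons_val_two, Matrix.cons_val_three]) (by norm_num [Matrix.cons_val_two, Matrix.cons_val_three]))) hxi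
      rw [Ldef] at h
      simp [Fin.sum_univ_four] at h
      linarith
    have n2 : 0 < x 2 := by
      have h := interior_bound ![0,0,-1,0] 2 (by norm_num [Matrix.cons_val_two, Matrix.cons_val_three]) (0+0)
        (S2_bound _ _ _
          (vertex_bound_P1 _ _ (by norm_num [Matrix.cons_val_two, Matrix.cons_val_three]) (by norm_num [Matrix.cons_val_two, Matrix.cons_val_three]) (by norm_num [Matrix.cons_val_two, Matrix.cons_val_three]) (by norm_num [Matrix.cons_val_two, Matrix.cons_val_three]))
          (vertex_bound_P2 _ _ (by norm_num [Matrix.cons_val_two, Matrix.cons_val_three]) (by norm_num [Matrix.cons_val_two, Matrix.cons_val_three]) (by norm_num [Matrix.cons_val_two, Matrix.cons_val_three]) (by norm_num [Matrix.cons_val_two, Matrix.cons_val_three]))) hxi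
      rw [Ldef] at h
      simp [Fin.sum_univ_four] at h
      linarith
    have n3 : 0 < x 3 := by
      have h := interior_bound ![0,0,0,-1] 3 (by norm_num [Matrix.cons_val_two, Matrix.cons_val_three]) (0+0)
        (S2_bound _ _ _
          (vertex_bound_P1 _ _ (by norm_num [Matrix.cons_val_two, Matrix.cons_val_three]) (by norm_num [Matrix.cons_val_two, Matrix.cons_val_three]) (by norm_num [Matrix.cons_val_two, Matrix.cons_val_three]) (by norm_num [Matrix.cons_val_two, Matrix.cons_val_three]))
          (vertex_bound_P2 _ _ (by norm_num [Matrix.cons_val_two, Matrix.cons_val_three]) (by norm_num [Matrix.cons_val_two, Matrix.cons_val_three]) (by norm_num [Matrix.cons_val_two, Matrix.cons_val_three]) (by norm_num [Matrix.cons_val_two, Matrix.cons_val_three]))) hxi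
      rw [Ldef] at h
      simp [Fin.sum_univ_four] at h
      linarith
    rw [hz 0, hz 1, hz 2, hz 3] at bsum
    rw [hz 0] at n0; rw [hz 1] at n1; rw [hz 2] at n2; rw [hz 3] at n3
    have isum : z 0 + z 1 + z 2 + z 3 < 4 := by exact_mod_cast bsum
    have j0 : 0 < z 0 := by exact_mod_cast n0
    have j1 : 0 < z 1 := by exact_mod_cast n1
    have j2 : 0 < z 2 := by exact_mod_cast n2
    have j3 : 0 < z 3 := by exact_mod_cast n3
    omega
end
end

section
/- For l >= 2, let P1,...,Pl be the l distinguished facets of the cube [0,1]^l in R^l, where P_i is the facet with i-th coordinate equal to 0 (for l=3: P1, P2, P3 are facets of [0,1]^3). For l = 3, the volume polynomial vol(T1*P1 + T2*P2 + T3*P3) equals (T1+T2)(T1+T3)(T2+T3). -/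
open MeasureTheory Pointwise

noncomputable section

/-- The facet of the cube [0,1]³ where the i-th coordinate vanishes. -/
def facet (i : Fin 3) : Set (Fin 3 → ℝ) :=
  {x | (∀ j, x j ∈ Set.Icc (0 : ℝ) 1) ∧ x i = 0}

lemma smul_facet (t : ℝ) (ht : 0 ≤ t) (i : Fin 3) :
    t • facet i = {x | (∀ j, x j ∈ Set.Icc (0 : ℝ) t) ∧ x i = 0} := by
  ext x
  constructor
  · rintro ⟨y, ⟨hy, hyi⟩, rfl⟩
    refine ⟨fun j => ?_, ?_⟩
    · have := hy j
      simp only [Set.mem_Icc] at this ⊢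
      constructor
      · exact mul_nonneg ht this.1
      · calc t * y j ≤ t * 1 := by nlinarith [this.2]
          _ = t := mul_one t
    · simp [hyi]
  · rintro ⟨hb, hi⟩
    rcases eq_or_lt_of_le ht with rfl | ht'
    · refine ⟨0, ⟨fun j => by simp, by simp⟩, ?_⟩
      funext j
      have := hb j
      simp only [Set.mem_Icc] at this
      simp only [Pi.smul_apply, Pi.zero_apply, smul_zero]
      linarith [this.1, this.2]
    · refine ⟨fun j => x j / t, ⟨fun j => ?_, by simp [hi]⟩, ?_⟩
      · have := hb j
        simp only [Set.mem_Icc] at this ⊢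
        exact ⟨div_nonneg this.1 ht, (div_le_one ht').mpr this.2⟩
      · funext j
        simp only [Pi.smul_apply, smul_eq_mul]
        field_simp

/-- For ℓ = 3, the volume polynomial of the three distinguished facets of the cube:
vol(T₁P₁ + T₂P₂ + T₃P₃) = (T₁+T₂)(T₁+T₃)(T₂+T₃). -/
theorem stmt6 (t1 t2 t3 : ℝ) (h1 : 0 ≤ t1) (h2 : 0 ≤ t2) (h3 : 0 ≤ t3) :
    (volume (t1 • facet 0 + t2 • facet 1 + t3 • facet 2)).toReal =
      (t1 + t2) * (t1 + t3) * (t2 + t3) := by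
  have hset : t1 • facet 0 + t2 • facet 1 + t3 • facet 2 =
      Set.univ.pi (fun i => Set.Icc (0 : ℝ) (![t2 + t3, t1 + t3, t1 + t2] i)) := by
    rw [smul_facet t1 h1, smul_facet t2 h2, smul_facet t3 h3]
    ext x
    simp only [Set.mem_add, Set.mem_setOf_eq, Set.mem_pi, Set.mem_univ, forall_true_left,
      Set.mem_Icc]
    constructor
    · rintro ⟨z, ⟨y, ⟨hy, hy0⟩, z', ⟨hz', hz'1⟩, rfl⟩, w, ⟨hw, hw2⟩, rfl⟩
      intro j
      have h0y := hy 0; have h1y := hy 1; have h2y := hy 2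
      have h0z := hz' 0; have h1z := hz' 1; have h2z := hz' 2
      have h0w := hw 0; have h1w := hw 1; have h2w := hw 2
      fin_cases j
      · show 0 ≤ y 0 + z' 0 + w 0 ∧ y 0 + z' 0 + w 0 ≤ t2 + t3
        constructor <;> linarith [h0y.1, h0z.1, h0w.1, h0z.2, h0w.2]
      · show 0 ≤ y 1 + z' 1 + w 1 ∧ y 1 + z' 1 + w 1 ≤ t1 + t3
        constructor <;> linarith [h1y.1, h1z.1, h1w.1, h1y.2, h1w.2]
      · show 0 ≤ y 2 + z' 2 + w 2 ∧ y 2 + z' 2 + w 2 ≤ t1 + t2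
        constructor <;> linarith [h2y.1, h2z.1, h2w.1, h2y.2, h2z.2]
    · intro hx
      have hx0 := hx 0; have hx1 := hx 1; have hx2 := hx 2
      simp only [Matrix.cons_val_zero, Matrix.cons_val_one, Matrix.head_cons,
        Matrix.cons_val_two, Matrix.tail_cons] at hx0 hx1 hx2
      refine ⟨![0, min (x 1) t1, min (x 2) t1] + ![min (x 0) t2, 0, x 2 - min (x 2) t1],
        ⟨![0, min (x 1) t1, min (x 2) t1], ⟨fun j => ?_, rfl⟩,
         ![min (x 0) t2, 0, x 2 - min (x 2) t1], ⟨fun j => ?_, rfl⟩, rfl⟩,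
        ![x 0 - min (x 0) t2, x 1 - min (x 1) t1, 0], ⟨fun j => ?_, rfl⟩, ?_⟩
      · fin_cases j
        · exact ⟨le_refl 0, h1⟩
        · exact ⟨le_min hx1.1 h1, min_le_right _ _⟩
        · exact ⟨le_min hx2.1 h1, min_le_right _ _⟩
      · fin_cases j
        · exact ⟨le_min hx0.1 h2, min_le_right _ _⟩
        · exact ⟨le_refl 0, h2⟩
        · show x 2 - min (x 2) t1 ∈ Set.Icc 0 t2
          refine ⟨sub_nonneg.mpr (min_le_left _ _), ?_⟩
          rcases le_total t1 (x 2) with h | h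
          · rw [min_eq_right h]; linarith [hx2.2]
          · rw [min_eq_left h]; linarith
      · fin_cases j
        · show x 0 - min (x 0) t2 ∈ Set.Icc 0 t3
          refine ⟨sub_nonneg.mpr (min_le_left _ _), ?_⟩
          rcases le_total t2 (x 0) with h | h
          · rw [min_eq_right h]; linarith [hx0.2]
          · rw [min_eq_left h]; linarith
        · show x 1 - min (x 1) t1 ∈ Set.Icc 0 t3
          refine ⟨sub_nonneg.mpr (min_le_left _ _), ?_⟩
          rcases le_total t1 (x 1) with h | h
          · rw [min_eq_right h]; linarith [hx1.2]
          · rw [min_eq_left h]; linarith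
        · exact ⟨le_refl 0, h3⟩
      · funext j
        fin_cases j <;> simp
  rw [hset, volume_pi_pi]
  rw [Fin.prod_univ_three]
  simp only [Matrix.cons_val_zero, Matrix.cons_val_one, Matrix.head_cons, Matrix.cons_val_two,
    Matrix.tail_cons, Real.volume_Icc, sub_zero]
  rw [← ENNReal.ofReal_mul (by linarith), ← ENNReal.ofReal_mul (by positivity),
    ENNReal.toReal_ofReal (by positivity)]
  ring

end
end

section
/- Let Sigma-integral denote extraction of the coefficient of T1*T2*...*Tl in Z[T1,...,Tl]/(T1^2,...,Tl^2), and set Hhat_i = sum_{j != i} T_j. Then the integral of the product over i of Hhat_i (i.e., the coefficient of T1...Tl in prod_{i=1}^l (sum_{j != i} T_j)) equals the number of derangements of {1,...,l}. -/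
/-!
Expanding the product gives one monomial `∏ᵢ T_{p i}` for each choice function `p` with
`p i ≠ i`. It equals `T₁⋯Tₗ` exactly when every fibre of `p` is a singleton, i.e. when `p`
is a bijection, and the bijections with `p i ≠ i` are the derangements.
-/

open MvPolynomial Finset

theorem Finsupp.sum_single_one_eq_one_iff_bijective {ι σ : Type*} [Fintype ι] [Fintype σ]
    (p : ι → σ) :
    ∑ i, Finsupp.single (p i) 1 = Finsupp.equivFunOnFinite.symm (fun _ : σ => 1) ↔
      Function.Bijective p := by
  classical
  have fiber_card (j : σ) : (∑ i, Finsupp.single (p i) 1 : σ →₀ ℕ) j = #{i | p i = j} := by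
    simp [Finsupp.finsetSum_apply, Finsupp.single_apply]
  simp only [Function.bijective_iff_existsUnique, Fintype.existsUnique_iff_card_one,
    Finsupp.ext_iff, fiber_card, Finsupp.coe_equivFunOnFinite_symm, eq_comm]

namespace MvPolynomial

variable {R ι σ : Type*} [CommSemiring R] [Fintype ι] [Fintype σ] [DecidableEq σ]

theorem coeff_one_prod_X (p : ι → σ) :
    coeff (Finsupp.equivFunOnFinite.symm fun _ : σ => 1) (∏ i, X (p i) : MvPolynomial σ R) =
      if Function.Bijective p then 1 else 0 := by
  simp only [X, ← monomial_sum_one, coeff_monomial, Finsupp.sum_single_one_eq_one_iff_bijective]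

theorem coeff_one_prod_sum_X (S : σ → Finset σ) :
    coeff (Finsupp.equivFunOnFinite.symm fun _ : σ => 1)
        (∏ i, ∑ j ∈ S i, X j : MvPolynomial σ R) =
      #{f : Equiv.Perm σ | ∀ i, f i ∈ S i} := by
  rw [prod_univ_sum, coeff_sum]
  simp only [coeff_one_prod_X, sum_boole]
  congr 1
  refine (card_bij (fun (f : Equiv.Perm σ) _ => ⇑f) (fun f hf => ?_) (fun f _ g _ h => Equiv.ext (congrFun h))
    (fun p hp => ?_)).symm
  · simpa [Fintype.mem_piFinset, f.bijective] using hf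
  · rw [mem_filter, Fintype.mem_piFinset] at hp
    exact ⟨Equiv.ofBijective p hp.2, by simpa using hp.1, rfl⟩

end MvPolynomial

/-- The coefficient of T₁T₂⋯Tₗ in ∏ᵢ (∑_{j ≠ i} Tⱼ) equals the number of
derangements of {1,…,ℓ}. -/
theorem stmt7 (l : ℕ) :
    MvPolynomial.coeff (Finsupp.equivFunOnFinite.symm fun _ : Fin l => 1)
      (∏ i : Fin l, ∑ j ∈ Finset.univ.erase i, (X j : MvPolynomial (Fin l) ℤ)) =
    (numDerangements l : ℤ) := by
  rw [coeff_one_prod_sum_X, ← card_derangements_fin_eq_numDerangements, Fintype.card_subtype]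
  congr!
  simp [derangements]
end
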